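/- Suppose α solves the curve diffusion flow with generalised Neumann boundary conditions inside the cone on [0,T). Then for all t ∈ [0,T), d/dt ∫ k² ds = − 2 ∫ k_ss² ds + 3 ∫ k² k_s² ds. -/

import Mathlib

open MeasureTheory Real Set

noncomputable section

/-- The arclength derivative of a scalar quantity along the curve `γ`. -/
def aderiv (γ : ℝ → EuclideanSpace ℝ (Fin 2)) (f : ℝ → ℝ) : ℝ → ℝ :=
  fun u => ‖deriv γ u‖⁻¹ * deriv f u

/-- The arclength derivative of a vector quantity along the curve `γ`. -/
def aderivV (γ : ℝ → EuclideanSpace ℝ (Fin 2)) (f : ℝ → EuclideanSpace ℝ (Fin 2)) :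
    ℝ → EuclideanSpace ℝ (Fin 2) :=
  fun u => ‖deriv γ u‖⁻¹ • deriv f u

/-- The unit tangent vector. -/
def tangentVec (γ : ℝ → EuclideanSpace ℝ (Fin 2)) : ℝ → EuclideanSpace ℝ (Fin 2) :=
  fun u => ‖deriv γ u‖⁻¹ • deriv γ u

/-- The (outward) unit normal: the clockwise rotation of the unit tangent. -/
def normalVec (γ : ℝ → EuclideanSpace ℝ (Fin 2)) : ℝ → EuclideanSpace ℝ (Fin 2) :=
  fun u => (WithLp.equiv 2 (Fin 2 → ℝ)).symm ![tangentVec γ u 1, -(tangentVec γ u 0)]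

/-- The scalar curvature `k = -⟨α_ss, ν⟩`. -/
def curvature (γ : ℝ → EuclideanSpace ℝ (Fin 2)) : ℝ → ℝ :=
  fun u => -(inner ℝ (aderivV γ (aderivV γ γ) u) (normalVec γ u) : ℝ)

/-- The `n`-th arclength derivative of the curvature, `k_{s^n}`. -/
def curvDeriv (γ : ℝ → EuclideanSpace ℝ (Fin 2)) (n : ℕ) : ℝ → ℝ :=
  (aderiv γ)^[n] (curvature γ)

/-- `∫ f ds` along the curve. -/
def arcIntegral (γ : ℝ → EuclideanSpace ℝ (Fin 2)) (f : ℝ → ℝ) : ℝ :=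
  ∫ u in (-1:ℝ)..1, f u * ‖deriv γ u‖

/-- The length `L = ∫ ds`. -/
def clength (γ : ℝ → EuclideanSpace ℝ (Fin 2)) : ℝ :=
  ∫ u in (-1:ℝ)..1, ‖deriv γ u‖

/-- The average curvature `k̄ = L⁻¹ ∫ k ds`. -/
def avgCurv (γ : ℝ → EuclideanSpace ℝ (Fin 2)) : ℝ :=
  (clength γ)⁻¹ * arcIntegral γ (curvature γ)

/-- The oscillation of curvature `K_osc = L ∫ (k - k̄)² ds`. -/
def Kosc (γ : ℝ → EuclideanSpace ℝ (Fin 2)) : ℝ :=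
  clength γ * arcIntegral γ (fun u => (curvature γ u - avgCurv γ) ^ 2)

/-- The area enclosed by the curve and the cone, `A = ½ ∫ ⟨α, ν⟩ ds`. -/
def enclosedArea (γ : ℝ → EuclideanSpace ℝ (Fin 2)) : ℝ :=
  (1 / 2) * arcIntegral γ (fun u => (inner ℝ (γ u) (normalVec γ u) : ℝ))

/-- The unit vector in direction `θ`. -/
def coneDir (θ : ℝ) : EuclideanSpace ℝ (Fin 2) :=
  (WithLp.equiv 2 (Fin 2 → ℝ)).symm ![Real.cos θ, Real.sin θ]

/-- `α` solves the curve diffusion flow `∂α/∂t = k_ss ν` with generalised Neumann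
boundary conditions inside the cone with angles `θ₂ < θ₁`, for times `t ∈ J`. -/
structure IsCDFlow (θ₁ θ₂ : ℝ) (J : Set ℝ) (α : ℝ → ℝ → EuclideanSpace ℝ (Fin 2)) : Prop where
  angle_nonneg : 0 ≤ θ₂
  angle_lt : θ₂ < θ₁
  angle_pi : θ₁ < Real.pi
  smooth : ContDiff ℝ (⊤ : ℕ∞) (fun p : ℝ × ℝ => α p.1 p.2)
  regular : ∀ t ∈ J, ∀ u ∈ Icc (-1:ℝ) 1, deriv (fun u => α u t) u ≠ 0
  flow : ∀ t ∈ J, ∀ u ∈ Icc (-1:ℝ) 1,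
    HasDerivAt (fun t => α u t)
      (curvDeriv (fun u => α u t) 2 u • normalVec (fun u => α u t) u) t
  bdry_left : ∀ t ∈ J, ∃ ρ : ℝ, 0 < ρ ∧ α (-1) t = ρ • coneDir θ₁
  bdry_right : ∀ t ∈ J, ∃ ρ : ℝ, 0 < ρ ∧ α 1 t = ρ • coneDir θ₂
  interior_cone : ∀ t ∈ J, ∀ u ∈ Ioo (-1:ℝ) 1,
    ∃ ρ θ : ℝ, 0 < ρ ∧ θ₂ < θ ∧ θ < θ₁ ∧ α u t = ρ • coneDir θ
  neumann_left : ∀ t ∈ J,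
    (inner ℝ (normalVec (fun u => α u t) (-1)) (coneDir (θ₁ + Real.pi / 2)) : ℝ) = 0
  neumann_right : ∀ t ∈ J,
    (inner ℝ (normalVec (fun u => α u t) 1) (coneDir (θ₂ + Real.pi / 2)) : ℝ) = 0
  noflux : ∀ t ∈ J,
    curvDeriv (fun u => α u t) 1 (-1) = 0 ∧ curvDeriv (fun u => α u t) 1 1 = 0



abbrev E2 := EuclideanSpace ℝ (Fin 2)

/-- clockwise rotation as a linear map -/
def rotL : E2 →ₗ[ℝ] E2 where
  toFun v := (WithLp.equiv 2 (Fin 2 → ℝ)).symm ![v 1, -(v 0)]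
  map_add' x y := by
    ext i
    fin_cases i <;> simp [WithLp.equiv_symm_apply] <;> ring
  map_smul' c x := by
    ext i
    fin_cases i <;> simp [WithLp.equiv_symm_apply] <;> ring

def rot : E2 →L[ℝ] E2 := LinearMap.toContinuousLinearMap rotL

lemma rot_apply (v : E2) : rot v = (WithLp.equiv 2 (Fin 2 → ℝ)).symm ![v 1, -(v 0)] := rfl

@[simp] lemma rot_apply0 (v : E2) : rot v 0 = v 1 := rfl
@[simp] lemma rot_apply1 (v : E2) : rot v 1 = -(v 0) := rfl

lemma inner2 (x y : E2) : (inner ℝ x y : ℝ) = x 0 * y 0 + x 1 * y 1 := by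
  simp [PiLp.inner_apply, Fin.sum_univ_two, RCLike.inner_apply, mul_comm]

lemma inner_rot_rot (x y : E2) : (inner ℝ (rot x) (rot y) : ℝ) = inner ℝ x y := by
  simp [inner2]; ring

@[simp] lemma inner_rot_self (x : E2) : (inner ℝ (rot x) x : ℝ) = 0 := by
  simp [inner2]; ring

@[simp] lemma inner_self_rot (x : E2) : (inner ℝ x (rot x) : ℝ) = 0 := by
  simp [inner2]; ring

@[simp] lemma rot_rot (x : E2) : rot (rot x) = -x := by
  ext i; fin_cases i <;> simp

lemma norm_sq_eq2 (x : E2) : ‖x‖ ^ 2 = x 0 ^ 2 + x 1 ^ 2 := by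
  rw [← real_inner_self_eq_norm_sq, inner2]; ring

/-- expansion of any vector in the orthonormal basis T, rot T when ‖T‖ = 1 -/
lemma basis_expand {T : E2} (hT : T 0 ^ 2 + T 1 ^ 2 = 1) (e : E2) :
    e = (inner ℝ e T : ℝ) • T + (inner ℝ e (rot T) : ℝ) • rot T := by
  ext i
  fin_cases i
  · show e _ = ((inner ℝ e T : ℝ) • T + (inner ℝ e (rot T) : ℝ) • rot T) _
    rw [PiLp.add_apply, PiLp.smul_apply, PiLp.smul_apply]
    simp only [Fin.zero_eta, Fin.mk_one, inner2, rot_apply0, rot_apply1, smul_eq_mul]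
    linear_combination (-(e 0)) * hT
  · show e _ = ((inner ℝ e T : ℝ) • T + (inner ℝ e (rot T) : ℝ) • rot T) _
    rw [PiLp.add_apply, PiLp.smul_apply, PiLp.smul_apply]
    simp only [Fin.zero_eta, Fin.mk_one, inner2, rot_apply0, rot_apply1, smul_eq_mul]
    linear_combination (-(e 1)) * hT

section slicederiv

variable {V : Type*} [NormedAddCommGroup V] [NormedSpace ℝ V]

lemma hasDerivAt_slice_u {f : ℝ × ℝ → V} {u t : ℝ} (hf : DifferentiableAt ℝ f (u, t)) :
    HasDerivAt (fun u => f (u, t)) (fderiv ℝ f (u, t) (1, 0)) u := by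
  have h1 : HasDerivAt (fun u : ℝ => (u, t)) ((1 : ℝ), (0 : ℝ)) u := by
    simpa using (hasDerivAt_id u).prodMk (hasDerivAt_const u t)
  exact hf.hasFDerivAt.comp_hasDerivAt u h1

lemma hasDerivAt_slice_t {f : ℝ × ℝ → V} {u t : ℝ} (hf : DifferentiableAt ℝ f (u, t)) :
    HasDerivAt (fun t => f (u, t)) (fderiv ℝ f (u, t) (0, 1)) t := by
  have h1 : HasDerivAt (fun t : ℝ => (u, t)) ((0 : ℝ), (1 : ℝ)) t := by
    simpa using (hasDerivAt_const t u).prodMk (hasDerivAt_id t)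
  exact hf.hasFDerivAt.comp_hasDerivAt t h1

/-- partial derivative in the first variable -/
def pdu (f : ℝ × ℝ → V) : ℝ × ℝ → V := fun p => fderiv ℝ f p (1, 0)

/-- partial derivative in the second variable -/
def pdt (f : ℝ × ℝ → V) : ℝ × ℝ → V := fun p => fderiv ℝ f p (0, 1)

lemma contDiff_pdu {f : ℝ × ℝ → V} (hf : ∀ n : ℕ, ContDiff ℝ n f) (n : ℕ) :
    ContDiff ℝ n (pdu f) := by
  have h := (hf (n + 1)).fderiv_right (m := n) (by exact_mod_cast le_refl _)
  exact (ContinuousLinearMap.apply ℝ V ((1 : ℝ), (0 : ℝ))).contDiff.comp h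

lemma contDiff_pdt {f : ℝ × ℝ → V} (hf : ∀ n : ℕ, ContDiff ℝ n f) (n : ℕ) :
    ContDiff ℝ n (pdt f) := by
  have h := (hf (n + 1)).fderiv_right (m := n) (by exact_mod_cast le_refl _)
  exact (ContinuousLinearMap.apply ℝ V ((0 : ℝ), (1 : ℝ))).contDiff.comp h

lemma fderiv_pd_apply {f : ℝ × ℝ → V} {p : ℝ × ℝ} (hf : ContDiffAt ℝ 2 f p)
    (v w : ℝ × ℝ) :
    fderiv ℝ (fun p => fderiv ℝ f p v) p w = fderiv ℝ (fderiv ℝ f) p w v := by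
  have hd : DifferentiableAt ℝ (fderiv ℝ f) p :=
    (hf.fderiv_right (m := 1) (by exact_mod_cast le_refl _)).differentiableAt
      (by norm_num)
  have h1 : (fun p => fderiv ℝ f p v) =
      fun p => (ContinuousLinearMap.apply ℝ V v) (fderiv ℝ f p) := rfl
  rw [h1, fderiv_clm_apply (differentiableAt_const _) hd]
  simp

lemma clairaut {f : ℝ × ℝ → V} {p : ℝ × ℝ} (hf : ContDiffAt ℝ 3 f p) :
    pdt (pdu f) p = pdu (pdt f) p := by
  have h2 : ContDiffAt ℝ 2 f p := hf.of_le (by norm_num)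
  have hsym : IsSymmSndFDerivAt ℝ f p := h2.isSymmSndFDerivAt (by simp [minSmoothness_of_isRCLikeNormedField])
  show fderiv ℝ (fun p => fderiv ℝ f p (1,0)) p (0,1)
      = fderiv ℝ (fun p => fderiv ℝ f p (0,1)) p (1,0)
  rw [fderiv_pd_apply h2, fderiv_pd_apply h2]
  exact hsym (0,1) (1,0)

/-- two functions agreeing on `Icc a b` have the same derivative there -/
lemma deriv_eq_on_Icc {f g : ℝ → V} {a b u : ℝ} (hab : a < b) (hu : u ∈ Icc a b)
    (hf : DifferentiableAt ℝ f u) (hg : DifferentiableAt ℝ g u)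
    (heq : EqOn f g (Icc a b)) : _root_.deriv f u = _root_.deriv g u := by
  have hud : UniqueDiffWithinAt ℝ (Icc a b) u := uniqueDiffOn_Icc hab u hu
  have h1 := (hf.hasDerivAt.hasDerivWithinAt (s := Icc a b)).derivWithin hud
  have h2 := (hg.hasDerivAt.hasDerivWithinAt (s := Icc a b)).derivWithin hud
  have h3 : derivWithin f (Icc a b) u = derivWithin g (Icc a b) u :=
    derivWithin_congr heq (heq hu)
  rw [← h1, h3, h2]

end slicederiv

/-! ### smoothness-on-open-set predicate -/

section smon

variable {W : Type*} [NormedAddCommGroup W] [NormedSpace ℝ W]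

def SmOn (V : Set ℝ) (f : ℝ → W) : Prop := ∀ n : ℕ, ContDiffOn ℝ n f V

variable {V : Set ℝ} (hV : IsOpen V)

lemma SmOn.of_contDiff {f : ℝ → W} (hf : ∀ n : ℕ, ContDiff ℝ n f) : SmOn V f :=
  fun n => (hf n).contDiffOn

include hV in
lemma SmOn.deriv {f : ℝ → W} (hf : SmOn V f) : SmOn V (_root_.deriv f) := fun n =>
  (hf (n + 1)).deriv_of_isOpen hV (by exact_mod_cast le_refl _)

include hV in
lemma SmOn.contDiffAt {f : ℝ → W} (hf : SmOn V f) {u : ℝ} (hu : u ∈ V) (n : ℕ) :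
    ContDiffAt ℝ n f u := (hf n).contDiffAt (hV.mem_nhds hu)

include hV in
lemma SmOn.differentiableAt {f : ℝ → W} (hf : SmOn V f) {u : ℝ} (hu : u ∈ V) :
    DifferentiableAt ℝ f u :=
  (hf.contDiffAt hV hu 1).differentiableAt (by norm_num)

lemma SmOn.continuousOn {f : ℝ → W} (hf : SmOn V f) : ContinuousOn f V := (hf 0).continuousOn

include hV in
lemma SmOn.hasDerivAt {f : ℝ → W} (hf : SmOn V f) {u : ℝ} (hu : u ∈ V) :
    HasDerivAt f (_root_.deriv f u) u := (hf.differentiableAt hV hu).hasDerivAt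

lemma SmOn.mul {f g : ℝ → ℝ} (hf : SmOn V f) (hg : SmOn V g) : SmOn V (fun u => f u * g u) :=
  fun n => (hf n).mul (hg n)

lemma SmOn.neg {f : ℝ → W} (hf : SmOn V f) : SmOn V (fun u => -f u) := fun n => (hf n).neg

lemma SmOn.inv {f : ℝ → ℝ} (hf : SmOn V f) (h0 : ∀ u ∈ V, f u ≠ 0) :
    SmOn V (fun u => (f u)⁻¹) := fun n => (hf n).inv h0

lemma SmOn.smul {f : ℝ → ℝ} {g : ℝ → W} (hf : SmOn V f) (hg : SmOn V g) :
    SmOn V (fun u => f u • g u) := fun n => (hf n).smul (hg n)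

lemma SmOn.inner' {f g : ℝ → E2} (hf : SmOn V f) (hg : SmOn V g) :
    SmOn V (fun u => (inner ℝ (f u) (g u) : ℝ)) := fun n => (hf n).inner ℝ (hg n)

lemma SmOn.rotc {f : ℝ → E2} (hf : SmOn V f) : SmOn V (fun u => rot (f u)) := fun n =>
  rot.contDiff.comp_contDiffOn (hf n)

end smon

/-! ### slice curve library -/

section slicecurve

variable {γ : ℝ → E2} {V : Set ℝ}
variable (hγ : ∀ n : ℕ, ContDiff ℝ n γ) (hV : IsOpen V)
variable (hreg : ∀ u ∈ V, _root_.deriv γ u ≠ 0)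

include hγ hV hreg

omit hV hreg in
lemma smon_deriv_gamma' (hV : IsOpen V) : SmOn V (_root_.deriv γ) :=
  SmOn.deriv hV (SmOn.of_contDiff hγ)

omit hγ hV in
lemma q_pos {u : ℝ} (hu : u ∈ V) : 0 < ‖_root_.deriv γ u‖ :=
  norm_pos_iff.mpr (hreg u hu)

lemma smon_q : SmOn V (fun u => ‖_root_.deriv γ u‖) := by
  intro n
  have h1 : ContDiffOn ℝ n (fun u => Real.sqrt ((inner ℝ (_root_.deriv γ u) (_root_.deriv γ u) : ℝ))) V := by
    apply ContDiffOn.sqrt (((smon_deriv_gamma' hγ hV).inner' (smon_deriv_gamma' hγ hV)) n)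
    intro u hu
    have := q_pos hreg hu
    rw [real_inner_self_eq_norm_sq]
    positivity
  apply h1.congr
  intro u _
  rw [real_inner_self_eq_norm_mul_norm, Real.sqrt_mul_self (norm_nonneg _)]

omit hγ hV hreg in
lemma tangent_eq : tangentVec γ = fun u => ‖_root_.deriv γ u‖⁻¹ • _root_.deriv γ u := rfl

omit hγ hV hreg in
lemma normal_eq_rot (u : ℝ) : normalVec γ u = rot (tangentVec γ u) := rfl

lemma smon_T : SmOn V (tangentVec γ) := by
  rw [tangent_eq]
  exact ((smon_q hγ hV hreg).inv (fun u hu => (q_pos hreg hu).ne')).smul (smon_deriv_gamma' hγ hV)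

lemma smon_nu : SmOn V (normalVec γ) := by
  have := (smon_T hγ hV hreg).rotc
  intro n
  exact (this n).congr (fun u _ => (normal_eq_rot u))

omit hγ hV in
lemma T_inner_self {u : ℝ} (hu : u ∈ V) :
    (inner ℝ (tangentVec γ u) (tangentVec γ u) : ℝ) = 1 := by
  rw [tangent_eq, real_inner_smul_left, real_inner_smul_right, real_inner_self_eq_norm_sq]
  have := q_pos hreg hu
  field_simp [sq]

omit hγ hV in
lemma T_comp_sq {u : ℝ} (hu : u ∈ V) :
    tangentVec γ u 0 ^ 2 + tangentVec γ u 1 ^ 2 = 1 := by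
  have h := T_inner_self hreg hu
  rw [inner2] at h
  nlinarith [h]

omit hγ hV hreg in
/-- the curvature as inner product of the tangent derivative with the normal -/
lemma curvature_eq (u : ℝ) :
    curvature γ u = -(‖_root_.deriv γ u‖⁻¹ *
      (inner ℝ (_root_.deriv (tangentVec γ) u) (normalVec γ u) : ℝ)) := by
  unfold curvature aderivV
  rw [real_inner_smul_left]
  rfl

lemma smon_curvature : SmOn V (curvature γ) := by
  have h : SmOn V (fun u => -(‖_root_.deriv γ u‖⁻¹ *
      (inner ℝ (_root_.deriv (tangentVec γ) u) (normalVec γ u) : ℝ))) :=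
    (((smon_q hγ hV hreg).inv (fun u hu => (q_pos hreg hu).ne')).mul
      (((smon_T hγ hV hreg).deriv hV).inner' (smon_nu hγ hV hreg))).neg
  intro n
  exact (h n).congr (fun u _ => (curvature_eq u))

omit hγ hV hreg in
lemma curvDeriv_succ (n : ℕ) :
    curvDeriv γ (n + 1) = fun u => ‖_root_.deriv γ u‖⁻¹ * _root_.deriv (curvDeriv γ n) u := by
  show (aderiv γ)^[n+1] (curvature γ) = _
  rw [Function.iterate_succ_apply']
  rfl

lemma smon_curvDeriv (n : ℕ) : SmOn V (curvDeriv γ n) := by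
  induction n with
  | zero => exact smon_curvature hγ hV hreg
  | succ n ih =>
    rw [curvDeriv_succ]
    exact ((smon_q hγ hV hreg).inv (fun u hu => (q_pos hreg hu).ne')).mul (ih.deriv hV)

lemma hasDerivAt_curvDeriv (n : ℕ) {u : ℝ} (hu : u ∈ V) :
    HasDerivAt (curvDeriv γ n) (‖_root_.deriv γ u‖ * curvDeriv γ (n + 1) u) u := by
  have hd := ((smon_curvDeriv hγ hV hreg n).differentiableAt hV hu).hasDerivAt
  have h2 : ‖_root_.deriv γ u‖ * curvDeriv γ (n + 1) u = _root_.deriv (curvDeriv γ n) u := by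
    rw [curvDeriv_succ]
    have := q_pos hreg hu
    field_simp
  rwa [h2]

/-- Frenet: T' = -(k q) ν -/
lemma hasDerivAt_T {u : ℝ} (hu : u ∈ V) :
    HasDerivAt (tangentVec γ)
      (-(curvature γ u * ‖_root_.deriv γ u‖) • normalVec γ u) u := by
  have hT' := ((smon_T hγ hV hreg).differentiableAt hV hu).hasDerivAt
  have hip : HasDerivAt (fun u => (inner ℝ (tangentVec γ u) (tangentVec γ u) : ℝ))
      ((inner ℝ (tangentVec γ u) (_root_.deriv (tangentVec γ) u) : ℝ) +
        (inner ℝ (_root_.deriv (tangentVec γ) u) (tangentVec γ u) : ℝ)) u := hT'.inner ℝ hT'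
  have hzero : (inner ℝ (_root_.deriv (tangentVec γ) u) (tangentVec γ u) : ℝ) = 0 := by
    have hconst : (fun u => (inner ℝ (tangentVec γ u) (tangentVec γ u) : ℝ)) =ᶠ[nhds u]
        (fun _ => (1:ℝ)) := by
      filter_upwards [hV.mem_nhds hu] with v hv
      exact T_inner_self hreg hv
    have h2 : HasDerivAt (fun u => (inner ℝ (tangentVec γ u) (tangentVec γ u) : ℝ)) 0 u :=
      (hasDerivAt_const u (1:ℝ)).congr_of_eventuallyEq hconst
    have h3 := hip.unique h2
    rw [real_inner_comm (tangentVec γ u)] at h3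
    rw [real_inner_comm]
    linarith
  have hk : (inner ℝ (_root_.deriv (tangentVec γ) u) (normalVec γ u) : ℝ) =
      -(curvature γ u * ‖_root_.deriv γ u‖) := by
    have h := curvature_eq (γ := γ) u
    have hq := q_pos hreg hu
    field_simp at h
    rw [inner2]
    rw [inner2] at h; linarith [h]
  have hexp := basis_expand (T_comp_sq hreg hu) (_root_.deriv (tangentVec γ) u)
  rw [show (inner ℝ (_root_.deriv (tangentVec γ) u) (rot (tangentVec γ u)) : ℝ) =
      (inner ℝ (_root_.deriv (tangentVec γ) u) (normalVec γ u) : ℝ) by rw [normal_eq_rot]] at hexp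
  rw [hzero, hk, ← normal_eq_rot] at hexp
  simp only [zero_smul, zero_add] at hexp
  rw [← hexp] at *
  exact hT'

lemma hasDerivAt_nu {u : ℝ} (hu : u ∈ V) :
    HasDerivAt (normalVec γ)
      ((curvature γ u * ‖_root_.deriv γ u‖) • tangentVec γ u) u := by
  have h1 : HasDerivAt (fun v => rot (tangentVec γ v))
      (rot (-(curvature γ u * ‖_root_.deriv γ u‖) • normalVec γ u)) u :=
    rot.hasFDerivAt.comp_hasDerivAt u (hasDerivAt_T hγ hV hreg hu)
  have h2 : rot (-(curvature γ u * ‖_root_.deriv γ u‖) • normalVec γ u) =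
      (curvature γ u * ‖_root_.deriv γ u‖) • tangentVec γ u := by
    rw [rot.map_smul, normal_eq_rot, rot_rot]
    rw [neg_smul, smul_neg, neg_neg]
  rw [h2] at h1
  exact h1.congr_of_eventuallyEq (by filter_upwards with v; rw [normal_eq_rot])

end slicecurve

/-! ### auxiliary facts -/

lemma coneDir_norm (θ : ℝ) : ‖coneDir θ‖ = 1 := by
  have h : ‖coneDir θ‖ ^ 2 = 1 := by
    rw [norm_sq_eq2]
    have h0 : coneDir θ 0 = Real.cos θ := rfl
    have h1 : coneDir θ 1 = Real.sin θ := rfl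
    rw [h0, h1]
    exact Real.cos_sq_add_sin_sq θ
  have h2 : (‖coneDir θ‖ - 1) * (‖coneDir θ‖ + 1) = 0 := by nlinarith
  rcases mul_eq_zero.mp h2 with h3 | h3
  · linarith
  · nlinarith [norm_nonneg (coneDir θ)]

lemma slice_differentiableAt {V : Type*} [NormedAddCommGroup V] [NormedSpace ℝ V]
    {f : ℝ × ℝ → V} {u t : ℝ} (hf : DifferentiableAt ℝ f (u, t)) :
    DifferentiableAt ℝ (fun u' => f (u', t)) u :=
  hf.comp u (differentiableAt_id.prodMk (differentiableAt_const _))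

lemma slice_continuousAt {V : Type*} [NormedAddCommGroup V] [NormedSpace ℝ V]
    {f : ℝ × ℝ → V} {u t : ℝ} (hf : ContinuousAt f (u, t)) :
    ContinuousAt (fun u' => f (u', t)) u := by
  have h : ContinuousAt (fun u' : ℝ => ((u' : ℝ), t)) u :=
    (continuous_id.prodMk continuous_const).continuousAt
  exact ContinuousAt.comp (f := fun u' : ℝ => ((u' : ℝ), t)) hf h

lemma slice_differentiableAt' {V : Type*} [NormedAddCommGroup V] [NormedSpace ℝ V]
    {f : ℝ × ℝ → V} {u t : ℝ} (hf : DifferentiableAt ℝ f (u, t)) :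
    DifferentiableAt ℝ (fun t' => f (u, t')) t :=
  hf.comp t ((differentiableAt_const _).prodMk differentiableAt_id)

set_option maxHeartbeats 1600000 in
theorem evolution_k_squared' (θ₁ θ₂ T : ℝ)
    (α : ℝ → ℝ → EuclideanSpace ℝ (Fin 2))
    (hflow : IsCDFlow θ₁ θ₂ (Ico 0 T) α) :
    ∀ t ∈ Ico (0:ℝ) T,
      HasDerivAt (fun t => arcIntegral (fun u => α u t)
          (fun u => curvature (fun u => α u t) u ^ 2))
        (-2 * arcIntegral (fun u => α u t) (fun u => curvDeriv (fun u => α u t) 2 u ^ 2) +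
          3 * arcIntegral (fun u => α u t)
            (fun u => curvature (fun u => α u t) u ^ 2 *
              curvDeriv (fun u => α u t) 1 u ^ 2)) t := by
  intro t₀ ht₀
  have ht0 : (0:ℝ) ≤ t₀ := ht₀.1
  have htT : t₀ < T := ht₀.2
  -- the joint map and its partial derivative
  set A : ℝ × ℝ → E2 := fun p => α p.1 p.2 with hAdef
  have hAsm : ∀ n : ℕ, ContDiff ℝ n A := fun n => hflow.smooth.of_le (by exact_mod_cast le_top)
  have hAd : ∀ p : ℝ × ℝ, DifferentiableAt ℝ A p := fun p =>
    ((hAsm 1).differentiable (by norm_num)).differentiableAt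
  set A1 : ℝ × ℝ → E2 := pdu A with hA1def
  have hA1sm : ∀ n : ℕ, ContDiff ℝ n A1 := contDiff_pdu hAsm
  have hA1d : ∀ p : ℝ × ℝ, DifferentiableAt ℝ A1 p := fun p =>
    ((hA1sm 1).differentiable (by norm_num)).differentiableAt
  have hA1slice : ∀ (t u : ℝ), _root_.deriv (fun u' => α u' t) u = A1 (u, t) := by
    intro t u
    exact (hasDerivAt_slice_u (hAd (u, t))).deriv
  -- the time-t₀ slice
  set γ : ℝ → E2 := fun u => α u t₀ with hγdef
  have hγ : ∀ n : ℕ, ContDiff ℝ n γ := fun n =>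
    (hAsm n).comp (contDiff_id.prodMk contDiff_const)
  -- the open sets of regular points
  set U : Set (ℝ × ℝ) := {p | A1 p ≠ 0} with hUdef
  have hUopen : IsOpen U := isOpen_compl_singleton.preimage (hA1sm 0).continuous
  set V : Set ℝ := {u | A1 (u, t₀) ≠ 0} with hVdef
  have hVopen : IsOpen V :=
    hUopen.preimage (continuous_id.prodMk continuous_const)
  have hreg : ∀ u ∈ V, _root_.deriv γ u ≠ 0 := by
    intro u hu
    rw [hγdef, hA1slice t₀ u]
    exact hu
  have hIccV : Icc (-1:ℝ) 1 ⊆ V := by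
    intro u hu
    have h := hflow.regular t₀ ⟨ht0, htT⟩ u hu
    rw [hA1slice t₀ u] at h
    exact h
  have hIccU : ∀ u ∈ Icc (-1:ℝ) 1, (u, t₀) ∈ U := fun u hu => hIccV hu
  have hq0 : ∀ u ∈ V, ‖_root_.deriv γ u‖ ≠ 0 := fun u hu => (q_pos hreg hu).ne'
  -- joint tangent vector
  set TT : ℝ × ℝ → E2 := fun p => ‖A1 p‖⁻¹ • A1 p with hTTdef
  have hTTct : ∀ (n : ℕ), ∀ p ∈ U, ContDiffAt ℝ n TT p := by
    intro n p hp
    have hnrm : ContDiffAt ℝ n (fun p => ‖A1 p‖) p :=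
      ContDiffAt.norm ℝ (hA1sm n).contDiffAt hp
    exact (hnrm.inv (norm_ne_zero_iff.mpr hp)).smul (hA1sm n).contDiffAt
  have hTTslice : ∀ (t u : ℝ), tangentVec (fun u' => α u' t) u = TT (u, t) := by
    intro t u
    show ‖_root_.deriv (fun u' => α u' t) u‖⁻¹ • _root_.deriv (fun u' => α u' t) u = _
    rw [hA1slice t u]
  -- Step 1: the flow equation expressed via the partial t derivative
  have hAt : ∀ u ∈ Icc (-1:ℝ) 1,
      pdt A (u, t₀) = curvDeriv γ 2 u • normalVec γ u := by
    intro u hu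
    have h1 : HasDerivAt (fun t => A (u, t)) (pdt A (u, t₀)) t₀ :=
      hasDerivAt_slice_t (hAd (u, t₀))
    exact h1.unique (hflow.flow t₀ ⟨ht0, htT⟩ u hu)
  -- Step 2: the u-derivative of the flow velocity field
  set β : ℝ → E2 := fun u => curvDeriv γ 2 u • normalVec γ u with hβdef
  have hβsm : SmOn V β :=
    (smon_curvDeriv hγ hVopen hreg 2).smul (smon_nu hγ hVopen hreg)
  have hA1t : ∀ u ∈ Icc (-1:ℝ) 1, pdt A1 (u, t₀) = _root_.deriv β u := by
    intro u hu
    have e1 : pdt A1 (u, t₀) = pdu (pdt A) (u, t₀) := clairaut (hAsm 3).contDiffAt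
    have e2 : pdu (pdt A) (u, t₀) = _root_.deriv (fun u' => pdt A (u', t₀)) u :=
      (hasDerivAt_slice_u (((contDiff_pdt hAsm 1).differentiable
        (by norm_num)).differentiableAt)).deriv.symm
    have e3 : _root_.deriv (fun u' => pdt A (u', t₀)) u = _root_.deriv β u := by
      apply deriv_eq_on_Icc (by norm_num : (-1:ℝ) < 1) hu
      · exact slice_differentiableAt ((contDiff_pdt hAsm 1).differentiable
          (by norm_num)).differentiableAt
      · exact hβsm.differentiableAt hVopen (hIccV hu)
      · intro u' hu'
        exact hAt u' hu'
    rw [e1, e2, e3]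
  -- Step 3: derivative of β via Frenet
  set D2 : ℝ → E2 := fun u =>
    curvDeriv γ 2 u • ((curvature γ u * ‖_root_.deriv γ u‖) • tangentVec γ u) +
      (‖_root_.deriv γ u‖ * curvDeriv γ 3 u) • normalVec γ u with hD2def
  have hβ' : ∀ u ∈ V, HasDerivAt β (D2 u) u := fun u hu =>
    (hasDerivAt_curvDeriv hγ hVopen hreg 2 hu).smul (hasDerivAt_nu hγ hVopen hreg hu)
  -- Step 4a: t-derivative of A1
  have hw : ∀ u ∈ Icc (-1:ℝ) 1, HasDerivAt (fun t => A1 (u, t)) (D2 u) t₀ := by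
    intro u hu
    have h1 : HasDerivAt (fun t => A1 (u, t)) (pdt A1 (u, t₀)) t₀ :=
      hasDerivAt_slice_t (hA1d (u, t₀))
    rwa [hA1t u hu, (hβ' u (hIccV hu)).deriv] at h1
  -- useful: γ' as q • T
  have hg1 : ∀ u ∈ V, _root_.deriv γ u = ‖_root_.deriv γ u‖ • tangentVec γ u := by
    intro u hu
    rw [tangent_eq, smul_smul]
    rw [mul_inv_cancel₀ (hq0 u hu), one_smul]
  have hTnu : ∀ u : ℝ, (inner ℝ (tangentVec γ u) (normalVec γ u) : ℝ) = 0 := by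
    intro u
    rw [normal_eq_rot]
    exact inner_self_rot _
  have hA1γ : ∀ u : ℝ, A1 (u, t₀) = _root_.deriv γ u := fun u => (hA1slice t₀ u).symm
  have hgT : ∀ u ∈ V, (inner ℝ (_root_.deriv γ u) (tangentVec γ u) : ℝ) = ‖_root_.deriv γ u‖ := by
    intro u hu
    simp only [tangent_eq]
    rw [real_inner_smul_right, real_inner_self_eq_norm_sq]
    field_simp [hq0 u hu]
  have hgnu : ∀ u ∈ V, (inner ℝ (_root_.deriv γ u) (normalVec γ u) : ℝ) = 0 := by
    intro u hu
    rw [normal_eq_rot]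
    simp only [tangent_eq]
    rw [rot.map_smul, real_inner_smul_right, inner_self_rot, mul_zero]
  have hnunu : ∀ u ∈ V, (inner ℝ (normalVec γ u) (normalVec γ u) : ℝ) = 1 := by
    intro u hu
    rw [normal_eq_rot]
    rw [show ((inner ℝ (rot (tangentVec γ u)) (rot (tangentVec γ u))) : ℝ)
        = (inner ℝ (tangentVec γ u) (tangentVec γ u) : ℝ) from inner_rot_rot _ _]
    exact T_inner_self hreg hu
  have hnuT : ∀ u : ℝ, (inner ℝ (normalVec γ u) (tangentVec γ u) : ℝ) = 0 := by
    intro u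
    rw [real_inner_comm]
    exact hTnu u
  have hiD : ∀ u ∈ V, (inner ℝ (_root_.deriv γ u) (D2 u) : ℝ)
      = ‖_root_.deriv γ u‖ ^ 2 * (curvature γ u * curvDeriv γ 2 u) := by
    intro u hu
    simp only [hD2def, inner_add_right, real_inner_smul_right]
    rw [hgT u hu, hgnu u hu]
    ring
  -- Step 4b: t-derivative of q
  have hQt : ∀ u ∈ Icc (-1:ℝ) 1, HasDerivAt (fun t => ‖A1 (u, t)‖)
      (‖_root_.deriv γ u‖ * (curvature γ u * curvDeriv γ 2 u)) t₀ := by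
    intro u hu
    have hu' := hIccV hu
    have hwu := hw u hu
    have hin : HasDerivAt (fun t => (inner ℝ (A1 (u, t)) (A1 (u, t)) : ℝ))
        ((inner ℝ (A1 (u, t₀)) (D2 u) : ℝ) + (inner ℝ (D2 u) (A1 (u, t₀)) : ℝ)) t₀ :=
      hwu.inner ℝ hwu
    have hpos : (0:ℝ) < (inner ℝ (A1 (u, t₀)) (A1 (u, t₀)) : ℝ) := by
      rw [hA1γ u, real_inner_self_eq_norm_sq]
      have := q_pos hreg hu'
      positivity
    have hsq := (Real.hasDerivAt_sqrt hpos.ne').comp t₀ hin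
    have hsq2 : HasDerivAt (fun t => ‖A1 (u, t)‖)
        (1 / (2 * Real.sqrt ((inner ℝ (A1 (u, t₀)) (A1 (u, t₀)) : ℝ))) *
          ((inner ℝ (A1 (u, t₀)) (D2 u) : ℝ) + (inner ℝ (D2 u) (A1 (u, t₀)) : ℝ))) t₀ := by
      apply hsq.congr_of_eventuallyEq
      filter_upwards with t
      show ‖A1 (u, t)‖ = Real.sqrt ((inner ℝ (A1 (u, t)) (A1 (u, t)) : ℝ))
      rw [real_inner_self_eq_norm_mul_norm, Real.sqrt_mul_self (norm_nonneg _)]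
    convert hsq2 using 1
    have hsymm : (inner ℝ (D2 u) (A1 (u, t₀)) : ℝ) = (inner ℝ (A1 (u, t₀)) (D2 u) : ℝ) :=
      real_inner_comm _ _
    rw [hsymm, hA1γ u, hiD u hu', real_inner_self_eq_norm_sq, Real.sqrt_sq (norm_nonneg _)]
    have hqne := hq0 u hu'
    field_simp
    ring
  have hTnorm : ∀ u ∈ V, ‖tangentVec γ u‖ = 1 := by
    intro u hu
    have h1 : ‖tangentVec γ u‖ ^ 2 = 1 := by
      rw [← real_inner_self_eq_norm_sq]
      exact T_inner_self hreg hu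
    nlinarith [norm_nonneg (tangentVec γ u)]
  have hqTnorm : ∀ u ∈ V, ‖‖_root_.deriv γ u‖ • tangentVec γ u‖ = ‖_root_.deriv γ u‖ := by
    intro u hu
    rw [norm_smul, hTnorm u hu, mul_one, norm_norm]
  -- Step 4c: t-derivative of the unit tangent
  have hTt : ∀ u ∈ Icc (-1:ℝ) 1, HasDerivAt (fun t => TT (u, t))
      (curvDeriv γ 3 u • normalVec γ u) t₀ := by
    intro u hu
    have hu' := hIccV hu
    have hA1n0 : ‖A1 (u, t₀)‖ ≠ 0 := by rw [hA1γ u]; exact hq0 u hu'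
    have hs := ((hQt u hu).inv hA1n0).smul (hw u hu)
    simp only [Pi.inv_apply] at hs
    refine HasDerivAt.congr_deriv (f := fun t => TT (u, t)) hs ?_
    symm
    rw [hA1γ u]
    rw [hg1 u hu']
    rw [hqTnorm u hu']
    simp only [hD2def]
    have hq := q_pos hreg hu'
    match_scalars
    all_goals field_simp
    all_goals ring
  -- Step 4d: t-derivative of the unit normal
  have hNt : ∀ u ∈ Icc (-1:ℝ) 1, HasDerivAt (fun t => rot (TT (u, t)))
      (curvDeriv γ 3 u • (-(tangentVec γ u))) t₀ := by
    intro u hu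
    have h1 := rot.hasFDerivAt.comp_hasDerivAt t₀ (hTt u hu)
    have h2 : rot (curvDeriv γ 3 u • normalVec γ u) = curvDeriv γ 3 u • (-(tangentVec γ u)) := by
      rw [rot.map_smul, normal_eq_rot, rot_rot]
    rwa [h2] at h1
  -- Step 5: k_sss vanishes at the boundary
  have hbdry : ∀ u ∈ Icc (-1:ℝ) 1, ∀ c : E2, ‖c‖ = 1 →
      (∀ t ∈ Ico (0:ℝ) T, (inner ℝ (normalVec (fun u' => α u' t) u) c : ℝ) = 0) →
      curvDeriv γ 3 u = 0 := by
    intro u hu c hc hneu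
    have hu' := hIccV hu
    have hg0 : ∀ t ∈ Ico (0:ℝ) T, (inner ℝ (rot (TT (u, t))) c : ℝ) = 0 := by
      intro t ht
      have h := hneu t ht
      rwa [normal_eq_rot, hTTslice t u] at h
    have hgd : HasDerivAt (fun t => (inner ℝ (rot (TT (u, t))) c : ℝ))
        ((inner ℝ (rot (TT (u, t₀))) (0:E2) : ℝ) +
          (inner ℝ (curvDeriv γ 3 u • (-(tangentVec γ u))) c : ℝ)) t₀ :=
      (hNt u hu).inner ℝ (hasDerivAt_const t₀ c)
    have hzero : (inner ℝ (rot (TT (u, t₀))) (0:E2) : ℝ) +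
        (inner ℝ (curvDeriv γ 3 u • (-(tangentVec γ u))) c : ℝ) = 0 := by
      have h1 := hgd.hasDerivWithinAt (s := Ici t₀)
      have h2 : HasDerivWithinAt (fun t => (inner ℝ (rot (TT (u, t))) c : ℝ)) 0 (Ici t₀) t₀ := by
        apply (hasDerivWithinAt_const t₀ (Ici t₀) (0:ℝ)).congr_of_eventuallyEq
        · filter_upwards [Ico_mem_nhdsGE htT]
            with t ht
          exact hg0 t ⟨le_trans ht0 ht.1, ht.2⟩
        · exact hg0 t₀ ⟨ht0, htT⟩
      have h3 := h1.derivWithin (uniqueDiffOn_Ici t₀ t₀ self_mem_Ici)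
      have h4 := h2.derivWithin (uniqueDiffOn_Ici t₀ t₀ self_mem_Ici)
      rw [← h3, h4]
    rw [inner_zero_right, real_inner_smul_left, zero_add, inner_neg_left] at hzero
    -- now show ⟨T, c⟩ ≠ 0
    have hnuc : (inner ℝ (normalVec γ u) c : ℝ) = 0 := hneu t₀ ⟨ht0, htT⟩
    have hexp := basis_expand (T_comp_sq hreg hu') c
    rw [← normal_eq_rot] at hexp
    have hcnu : (inner ℝ c (normalVec γ u) : ℝ) = 0 := by
      rw [real_inner_comm]; exact hnuc
    rw [hcnu, zero_smul, add_zero] at hexp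
    have h4 : (inner ℝ c c : ℝ) = (inner ℝ c (tangentVec γ u) : ℝ) ^ 2 := by
      conv_lhs => rw [hexp]
      rw [real_inner_smul_left, real_inner_smul_right, T_inner_self hreg hu']
      ring
    have h5 : (inner ℝ c c : ℝ) = 1 := by
      rw [real_inner_self_eq_norm_sq, hc]; norm_num
    have h6 : (inner ℝ (tangentVec γ u) c : ℝ) ≠ 0 := by
      intro h
      rw [real_inner_comm] at h
      rw [h] at h4
      rw [h5] at h4
      norm_num at h4
    have h7 : curvDeriv γ 3 u * -(inner ℝ (tangentVec γ u) c : ℝ) = 0 := hzero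
    rcases mul_eq_zero.mp h7 with h8 | h8
    · exact h8
    · exact absurd (neg_eq_zero.mp h8) h6
  have hk3L : curvDeriv γ 3 (-1) = 0 :=
    hbdry (-1) (by norm_num) _ (coneDir_norm _) (fun t ht => hflow.neumann_left t ht)
  have hk3R : curvDeriv γ 3 1 = 0 :=
    hbdry 1 (by norm_num) _ (coneDir_norm _) (fun t ht => hflow.neumann_right t ht)
  -- Step 6: the joint curvature and integrand
  set KJ : ℝ × ℝ → ℝ := fun p => -(‖A1 p‖⁻¹ * (inner ℝ (pdu TT p) (rot (TT p)) : ℝ)) with hKJdef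
  set GJ : ℝ × ℝ → ℝ := fun p => KJ p ^ 2 * ‖A1 p‖ with hGJdef
  have hpduTTct : ∀ (n : ℕ), ∀ p ∈ U, ContDiffAt ℝ n (pdu TT) p := by
    intro n p hp
    have h1 : ContDiffAt ℝ n (fderiv ℝ TT) p :=
      (hTTct (n + 1) p hp).fderiv_right (by exact_mod_cast le_refl _)
    exact (ContinuousLinearMap.apply ℝ E2 ((1:ℝ), (0:ℝ))).contDiff.contDiffAt.comp p h1
  have hKJct : ∀ (n : ℕ), ∀ p ∈ U, ContDiffAt ℝ n KJ p := by
    intro n p hp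
    have hnrm : ContDiffAt ℝ n (fun p => ‖A1 p‖) p :=
      ContDiffAt.norm ℝ (hA1sm n).contDiffAt hp
    exact (((hnrm.inv (norm_ne_zero_iff.mpr hp)).mul
      ((hpduTTct n p hp).inner ℝ (rot.contDiff.contDiffAt.comp p (hTTct n p hp)))).neg)
  have hGJct : ∀ (n : ℕ), ∀ p ∈ U, ContDiffAt ℝ n GJ p := by
    intro n p hp
    exact ((hKJct n p hp).pow 2).mul (ContDiffAt.norm ℝ (hA1sm n).contDiffAt hp)
  have hpduTT_slice : ∀ p ∈ U, pdu TT p = _root_.deriv (tangentVec (fun u' => α u' p.2)) p.1 := by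
    intro p hp
    have h1 : tangentVec (fun u' => α u' p.2) = fun u' => TT (u', p.2) :=
      funext (hTTslice p.2)
    rw [h1]
    exact (hasDerivAt_slice_u ((hTTct 1 p hp).differentiableAt (by norm_num))).deriv.symm
  have hKslice : ∀ p ∈ U, curvature (fun u' => α u' p.2) p.1 = KJ p := by
    intro p hp
    rw [curvature_eq]
    simp only [hKJdef]
    rw [hA1slice p.2 p.1, hpduTT_slice p hp]
    have h2 : normalVec (fun u' => α u' p.2) p.1 = rot (TT (p.1, p.2)) := by
      rw [normal_eq_rot, hTTslice]
    rw [h2]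
  have hGJslice : ∀ p ∈ U,
      curvature (fun u' => α u' p.2) p.1 ^ 2 * ‖_root_.deriv (fun u' => α u' p.2) p.1‖
        = GJ p := by
    intro p hp
    rw [hKslice p hp, hA1slice p.2 p.1]
  have hGderiv : ∀ p ∈ U, HasDerivAt (fun t => GJ (p.1, t)) (pdt GJ p) p.2 := by
    intro p hp
    exact hasDerivAt_slice_t ((hGJct 1 p hp).differentiableAt (by norm_num))
  -- Step 6b: value of the time derivative of the integrand at time t₀
  have hpdtTTct : ∀ (n : ℕ), ∀ p ∈ U, ContDiffAt ℝ n (pdt TT) p := by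
    intro n p hp
    have h1 : ContDiffAt ℝ n (fderiv ℝ TT) p :=
      (hTTct (n + 1) p hp).fderiv_right (by exact_mod_cast le_refl _)
    exact (ContinuousLinearMap.apply ℝ E2 ((0:ℝ), (1:ℝ))).contDiff.contDiffAt.comp p h1
  have hGtval : ∀ u ∈ Icc (-1:ℝ) 1, pdt GJ (u, t₀) =
      ‖_root_.deriv γ u‖ * (-2 * curvature γ u * curvDeriv γ 4 u
        - curvature γ u ^ 3 * curvDeriv γ 2 u) := by
    intro u hu
    have hu' := hIccV hu
    have hpU : (u, t₀) ∈ U := hIccU u hu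
    have hQtu := hQt u hu
    have hA1n0 : ‖A1 (u, t₀)‖ ≠ 0 := by rw [hA1γ u]; exact hq0 u hu'
    -- value of pdu TT at time t₀
    have hBp0 : pdu TT (u, t₀) = -(curvature γ u * ‖_root_.deriv γ u‖) • normalVec γ u := by
      have h1 := hpduTT_slice (u, t₀) hpU
      rw [h1]
      exact (hasDerivAt_T hγ hVopen hreg hu').deriv
    have hrot0 : rot (TT (u, t₀)) = normalVec γ u := by
      rw [show TT (u, t₀) = tangentVec γ u from (hTTslice t₀ u).symm, ← normal_eq_rot]
    -- the slice values of pdt TT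
    have hk3nv : ∀ u' ∈ Icc (-1:ℝ) 1,
        pdt TT (u', t₀) = curvDeriv γ 3 u' • normalVec γ u' := by
      intro u' hu2
      have h1 : HasDerivAt (fun t => TT (u', t)) (pdt TT (u', t₀)) t₀ :=
        hasDerivAt_slice_t ((hTTct 1 (u', t₀) (hIccU u' hu2)).differentiableAt (by norm_num))
      exact h1.unique (hTt u' hu2)
    -- time derivative of pdu TT
    have hBt : HasDerivAt (fun t => pdu TT (u, t))
        (curvDeriv γ 3 u • ((curvature γ u * ‖_root_.deriv γ u‖) • tangentVec γ u) +
          (‖_root_.deriv γ u‖ * curvDeriv γ 4 u) • normalVec γ u) t₀ := by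
      have h1 : HasDerivAt (fun t => pdu TT (u, t)) (pdt (pdu TT) (u, t₀)) t₀ :=
        hasDerivAt_slice_t ((hpduTTct 1 (u, t₀) hpU).differentiableAt (by norm_num))
      have e1 : pdt (pdu TT) (u, t₀) = pdu (pdt TT) (u, t₀) := clairaut (hTTct 3 (u, t₀) hpU)
      have e2 : pdu (pdt TT) (u, t₀) = _root_.deriv (fun u' => pdt TT (u', t₀)) u :=
        (hasDerivAt_slice_u ((hpdtTTct 1 (u, t₀) hpU).differentiableAt (by norm_num))).deriv.symm
      have e4 : HasDerivAt (fun u' => curvDeriv γ 3 u' • normalVec γ u')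
          (curvDeriv γ 3 u • ((curvature γ u * ‖_root_.deriv γ u‖) • tangentVec γ u) +
            (‖_root_.deriv γ u‖ * curvDeriv γ (3 + 1) u) • normalVec γ u) u :=
        (hasDerivAt_curvDeriv hγ hVopen hreg 3 hu').smul (hasDerivAt_nu hγ hVopen hreg hu')
      have e3 : _root_.deriv (fun u' => pdt TT (u', t₀)) u
          = _root_.deriv (fun u' => curvDeriv γ 3 u' • normalVec γ u') u := by
        apply deriv_eq_on_Icc (by norm_num : (-1:ℝ) < 1) hu
        · exact slice_differentiableAt ((hpdtTTct 1 (u, t₀) hpU).differentiableAt (by norm_num))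
        · exact e4.differentiableAt
        · intro u' hu2
          exact hk3nv u' hu2
      rw [e1, e2, e3, e4.deriv] at h1
      exact h1
    -- time derivative of the joint curvature
    have hrotTTt : HasDerivAt (fun t => rot (TT (u, t)))
        (rot (curvDeriv γ 3 u • normalVec γ u)) t₀ :=
      rot.hasFDerivAt.comp_hasDerivAt t₀ (hTt u hu)
    have hinner := hBt.inner ℝ hrotTTt
    have hKt := (((hQtu.inv hA1n0).mul hinner)).neg
    simp only [Pi.inv_apply] at hKt
    have hKt2 : HasDerivAt (fun t => KJ (u, t))
        (-(curvDeriv γ 4 u + curvature γ u ^ 2 * curvDeriv γ 2 u)) t₀ := by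
      refine HasDerivAt.congr_deriv (f := fun t => KJ (u, t)) hKt ?_
      symm
      rw [hBp0, hrot0, hA1γ u]
      have hrnu : rot (normalVec γ u) = -(tangentVec γ u) := by
        rw [normal_eq_rot, rot_rot]
      rw [rot.map_smul, hrnu]
      simp only [inner_add_left, inner_add_right, real_inner_smul_left, real_inner_smul_right,
        inner_neg_left, inner_neg_right]
      rw [hTnu u, hnuT u, hnunu u hu']
      have hq := q_pos hreg hu'
      field_simp
      ring
    -- conclude
    have hKJ0 : KJ (u, t₀) = curvature γ u := (hKslice (u, t₀) hpU).symm
    have hGt2 := (hKt2.pow 2).mul hQtu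
    have huniq := (hGderiv (u, t₀) hpU).unique hGt2
    simp only [Pi.pow_apply] at huniq
    rw [huniq, hKJ0, hA1γ u]
    ring
  -- Step 7: differentiation under the integral sign
  -- the rectangle of regular points
  have hKcomp : IsCompact ((Icc (-1:ℝ) 1) ×ˢ (Icc t₀ t₀)) := isCompact_Icc.prod isCompact_Icc
  have hKU : (Icc (-1:ℝ) 1) ×ˢ (Icc t₀ t₀) ⊆ U := by
    rintro ⟨u, t⟩ ⟨hu, ht⟩
    have hteq : t = t₀ := le_antisymm ht.2 ht.1
    rw [hteq]
    exact hIccU u hu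
  obtain ⟨δ, hδpos, hδsub⟩ := hKcomp.exists_thickening_subset_open hUopen hKU
  set ε : ℝ := δ / 2 with hεdef
  have hεpos : 0 < ε := by positivity
  have hrect : ∀ u ∈ Icc (-1:ℝ) 1, ∀ t ∈ Icc (t₀ - ε) (t₀ + ε), (u, t) ∈ U := by
    intro u hu t ht
    apply hδsub
    rw [Metric.mem_thickening_iff]
    refine ⟨(u, t₀), ⟨hu, left_mem_Icc.mpr (le_refl _)⟩, ?_⟩
    rw [Prod.dist_eq]
    have h1 : dist u u = 0 := dist_self u
    have h2 : dist t t₀ ≤ ε := by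
      rw [Real.dist_eq, abs_sub_le_iff]
      constructor <;> linarith [ht.1, ht.2]
    rw [h1]
    have : max 0 (dist t t₀) ≤ ε := max_le (le_of_lt hεpos) h2
    linarith [this]
  have hballIcc : Metric.ball t₀ ε ⊆ Icc (t₀ - ε) (t₀ + ε) := by
    intro t ht
    rw [Metric.mem_ball, Real.dist_eq, abs_sub_lt_iff] at ht
    exact ⟨by linarith [ht.2], by linarith [ht.1]⟩
  -- continuity of GJ and pdt GJ
  have hGJcont : ∀ p ∈ U, ContinuousAt GJ p := fun p hp => (hGJct 0 p hp).continuousAt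
  have hpdtGJcont : ∀ p ∈ U, ContinuousAt (pdt GJ) p := by
    intro p hp
    have h1 : ContDiffAt ℝ 1 (fderiv ℝ GJ) p :=
      (hGJct 2 p hp).fderiv_right (by exact_mod_cast le_refl _)
    exact (ContinuousLinearMap.apply ℝ ℝ ((0:ℝ), (1:ℝ))).continuous.continuousAt.comp
      h1.continuousAt
  -- a bound for pdt GJ on the rectangle
  have hRcomp : IsCompact ((Icc (-1:ℝ) 1) ×ˢ (Icc (t₀ - ε) (t₀ + ε))) :=
    isCompact_Icc.prod isCompact_Icc
  have hRU : (Icc (-1:ℝ) 1) ×ˢ (Icc (t₀ - ε) (t₀ + ε)) ⊆ U := by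
    rintro ⟨u, t⟩ ⟨hu, ht⟩
    exact hrect u hu t ht
  obtain ⟨M, hM⟩ := hRcomp.exists_bound_of_continuousOn
    (fun p hp => ((hpdtGJcont p (hRU hp)).continuousWithinAt))
  -- the slice equality of the integrand
  have hFeq : ∀ (x : ℝ), x ∈ Icc (t₀ - ε) (t₀ + ε) → ∀ u' ∈ Icc (-1:ℝ) 1,
      curvature (fun u'' => α u'' x) u' ^ 2 * ‖_root_.deriv (fun u'' => α u'' x) u'‖
        = GJ (u', x) := by
    intro x hx u' hu'
    exact hGJslice (u', x) (hrect u' hu' x hx)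
  have hinf : ((-1:ℝ) ⊓ 1) = -1 := min_eq_left (by norm_num)
  have hsup : ((-1:ℝ) ⊔ 1) = 1 := max_eq_right (by norm_num)
  have hmain : HasDerivAt (fun t => arcIntegral (fun u => α u t)
      (fun u => curvature (fun u => α u t) u ^ 2))
      (∫ u in (-1:ℝ)..1, pdt GJ (u, t₀)) t₀ := by
    have key := intervalIntegral.hasDerivAt_integral_of_dominated_loc_of_deriv_le
      (F := fun x u' => curvature (fun u'' => α u'' x) u' ^ 2 *
        ‖_root_.deriv (fun u'' => α u'' x) u'‖)
      (F' := fun x u' => pdt GJ (u', x)) (x₀ := t₀) (a := (-1:ℝ)) (b := 1)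
      (μ := volume) (bound := fun _ => M) (s := Metric.ball t₀ ε) (Metric.ball_mem_nhds t₀ hεpos) ?_ ?_ ?_ ?_ ?_ ?_
    · exact key.2
    · -- a.e. measurability of F x near t₀
      filter_upwards [Metric.ball_mem_nhds t₀ hεpos] with x hx
      have hx' := hballIcc hx
      simp only [Set.uIoc, hinf, hsup]
      apply ContinuousOn.aestronglyMeasurable _ measurableSet_Ioc
      have h1 : ContinuousOn (fun u' => GJ (u', x)) (Ioc (-1:ℝ) 1) := by
        intro u' hu'
        exact (slice_continuousAt
          (hGJcont (u', x) (hrect u' (Ioc_subset_Icc_self hu') x hx'))).continuousWithinAt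
      apply h1.congr
      intro u' hu'
      exact hFeq x hx' u' (Ioc_subset_Icc_self hu')
    · -- interval integrability of F t₀
      apply ContinuousOn.intervalIntegrable
      rw [uIcc_of_le (by norm_num : (-1:ℝ) ≤ 1)]
      have h1 : ContinuousOn (fun u' => GJ (u', t₀)) (Icc (-1:ℝ) 1) := by
        intro u' hu'
        exact (slice_continuousAt (hGJcont (u', t₀) (hIccU u' hu'))).continuousWithinAt
      apply h1.congr
      intro u' hu'
      exact hFeq t₀ (by constructor <;> linarith [hεpos]) u' hu'
    · -- a.e. measurability of F' t₀
      simp only [Set.uIoc, hinf, hsup]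
      apply ContinuousOn.aestronglyMeasurable _ measurableSet_Ioc
      intro u' hu'
      exact (slice_continuousAt
        (hpdtGJcont (u', t₀) (hIccU u' (Ioc_subset_Icc_self hu')))).continuousWithinAt
    · -- the uniform bound
      apply MeasureTheory.ae_of_all
      intro u' hu' x hx
      rw [Set.uIoc, hinf, hsup] at hu'
      exact hM (u', x) ⟨Ioc_subset_Icc_self hu', hballIcc hx⟩
    · exact intervalIntegrable_const
    · -- differentiability in t
      apply MeasureTheory.ae_of_all
      intro u' hu' x hx
      rw [Set.uIoc, hinf, hsup] at hu'
      have hu'' := Ioc_subset_Icc_self hu'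
      have hUx : (u', x) ∈ U := hrect u' hu'' x (hballIcc hx)
      have hloc : HasDerivAt (fun t => GJ (u', t)) (pdt GJ (u', x)) x := hGderiv (u', x) hUx
      apply hloc.congr_of_eventuallyEq
      have hopen : IsOpen {t : ℝ | (u', t) ∈ U} :=
        hUopen.preimage (continuous_const.prodMk continuous_id)
      filter_upwards [hopen.mem_nhds hUx] with t ht
      exact hGJslice (u', t) ht
  -- Step 8: computing the integral
  have hfinal : (∫ u in (-1:ℝ)..1, pdt GJ (u, t₀)) =
      -2 * arcIntegral (fun u => α u t₀) (fun u => curvDeriv (fun u => α u t₀) 2 u ^ 2) +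
        3 * arcIntegral (fun u => α u t₀)
          (fun u => curvature (fun u => α u t₀) u ^ 2 *
            curvDeriv (fun u => α u t₀) 1 u ^ 2) := by
    have ck : ∀ i : ℕ, ContinuousOn (curvDeriv γ i) V := fun i =>
      (smon_curvDeriv hγ hVopen hreg i).continuousOn
    have ck0 : ContinuousOn (curvature γ) V := (smon_curvature hγ hVopen hreg).continuousOn
    have cq : ContinuousOn (fun u => ‖_root_.deriv γ u‖) V := (smon_q hγ hVopen hreg).continuousOn
    have hnfL : curvDeriv γ 1 (-1) = 0 := (hflow.noflux t₀ ⟨ht0, htT⟩).1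
    have hnfR : curvDeriv γ 1 1 = 0 := (hflow.noflux t₀ ⟨ht0, htT⟩).2
    set HH : ℝ → ℝ := fun u => -2 * curvature γ u * curvDeriv γ 3 u
      + 2 * curvDeriv γ 1 u * curvDeriv γ 2 u - curvature γ u ^ 3 * curvDeriv γ 1 u with hHHdef
    set WW : ℝ → ℝ := fun u => ‖_root_.deriv γ u‖ * (-2 * curvature γ u * curvDeriv γ 4 u
      - curvature γ u ^ 3 * curvDeriv γ 2 u)
      - (-2 * curvDeriv γ 2 u ^ 2 + 3 * curvature γ u ^ 2 * curvDeriv γ 1 u ^ 2)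
        * ‖_root_.deriv γ u‖ with hWWdef
    have hHH : ∀ u ∈ Icc (-1:ℝ) 1, HasDerivAt HH (WW u) u := by
      intro u hu
      have hu' := hIccV hu
      have h0 : HasDerivAt (curvature γ) (‖_root_.deriv γ u‖ * curvDeriv γ 1 u) u :=
        hasDerivAt_curvDeriv hγ hVopen hreg 0 hu'
      have h1 := hasDerivAt_curvDeriv hγ hVopen hreg 1 hu'
      have h2 := hasDerivAt_curvDeriv hγ hVopen hreg 2 hu'
      have h3 := hasDerivAt_curvDeriv hγ hVopen hreg 3 hu'
      have t1 := ((hasDerivAt_const u (-2:ℝ)).mul h0).mul h3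
      have t2 := ((hasDerivAt_const u (2:ℝ)).mul h1).mul h2
      have t3 := (h0.pow 3).mul h1
      have ht := (t1.add t2).sub t3
      refine HasDerivAt.congr_deriv (f := HH) ht ?_
      symm
      simp only [hWWdef]
      norm_num
      ring
    have hWWcontV : ContinuousOn WW V := by
      simp only [hWWdef]
      exact (cq.mul (((continuousOn_const.mul ck0).mul (ck 4)).sub
        ((ck0.pow 3).mul (ck 2)))).sub
        (((continuousOn_const.mul ((ck 2).pow 2)).add
          ((continuousOn_const.mul (ck0.pow 2)).mul ((ck 1).pow 2))).mul cq)
    have hWWint : IntervalIntegrable WW volume (-1) 1 := by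
      apply ContinuousOn.intervalIntegrable
      rw [uIcc_of_le (by norm_num : (-1:ℝ) ≤ 1)]
      exact hWWcontV.mono hIccV
    have hFTC : (∫ u in (-1:ℝ)..1, WW u) = HH 1 - HH (-1) := by
      apply intervalIntegral.integral_eq_sub_of_hasDerivAt
      · intro u hu
        rw [uIcc_of_le (by norm_num : (-1:ℝ) ≤ 1)] at hu
        exact hHH u hu
      · exact hWWint
    have hHH1 : HH 1 = 0 := by
      simp only [hHHdef]
      rw [hk3R, hnfR]
      ring
    have hHHm1 : HH (-1) = 0 := by
      simp only [hHHdef]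
      rw [hk3L, hnfL]
      ring
    have hR1contV : ContinuousOn (fun u => curvDeriv γ 2 u ^ 2 * ‖_root_.deriv γ u‖) V :=
      ((ck 2).pow 2).mul cq
    have hR2contV : ContinuousOn
        (fun u => curvature γ u ^ 2 * curvDeriv γ 1 u ^ 2 * ‖_root_.deriv γ u‖) V :=
      ((ck0.pow 2).mul ((ck 1).pow 2)).mul cq
    have hR1int : IntervalIntegrable (fun u => curvDeriv γ 2 u ^ 2 * ‖_root_.deriv γ u‖)
        volume (-1) 1 := by
      apply ContinuousOn.intervalIntegrable
      rw [uIcc_of_le (by norm_num : (-1:ℝ) ≤ 1)]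
      exact hR1contV.mono hIccV
    have hR2int : IntervalIntegrable
        (fun u => curvature γ u ^ 2 * curvDeriv γ 1 u ^ 2 * ‖_root_.deriv γ u‖)
        volume (-1) 1 := by
      apply ContinuousOn.intervalIntegrable
      rw [uIcc_of_le (by norm_num : (-1:ℝ) ≤ 1)]
      exact hR2contV.mono hIccV
    have hsplit : EqOn (fun u => pdt GJ (u, t₀))
        (fun u => WW u + (-2 * (curvDeriv γ 2 u ^ 2 * ‖_root_.deriv γ u‖) +
          3 * (curvature γ u ^ 2 * curvDeriv γ 1 u ^ 2 * ‖_root_.deriv γ u‖)))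
        (uIcc (-1:ℝ) 1) := by
      intro u hu
      rw [uIcc_of_le (by norm_num : (-1:ℝ) ≤ 1)] at hu
      show pdt GJ (u, t₀) = _
      rw [hGtval u hu]
      simp only [hWWdef]
      ring
    have hrint : IntervalIntegrable
        (fun u => -2 * (curvDeriv γ 2 u ^ 2 * ‖_root_.deriv γ u‖) +
          3 * (curvature γ u ^ 2 * curvDeriv γ 1 u ^ 2 * ‖_root_.deriv γ u‖)) volume (-1) 1 :=
      (hR1int.const_mul (-2)).add (hR2int.const_mul 3)
    show _ = -2 * (∫ u in (-1:ℝ)..1, curvDeriv γ 2 u ^ 2 * ‖_root_.deriv γ u‖) +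
        3 * (∫ u in (-1:ℝ)..1, curvature γ u ^ 2 * curvDeriv γ 1 u ^ 2 * ‖_root_.deriv γ u‖)
    rw [intervalIntegral.integral_congr hsplit,
      intervalIntegral.integral_add hWWint hrint, hFTC, hHH1, hHHm1,
      intervalIntegral.integral_add ((hR1int.const_mul (-2))) ((hR2int.const_mul 3)),
      intervalIntegral.integral_const_mul, intervalIntegral.integral_const_mul]
    ring
  rwa [hfinal] at hmain
/-- **Evolution of `∫ k² ds`.** Under the curve diffusion flow with generalised Neumann
boundary conditions inside the cone, for all `t ∈ [0,T)`,
`d/dt ∫ k² ds = -2 ∫ k_ss² ds + 3 ∫ k² k_s² ds`. -/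
theorem evolution_k_squared (θ₁ θ₂ T : ℝ)
    (α : ℝ → ℝ → EuclideanSpace ℝ (Fin 2))
    (hflow : IsCDFlow θ₁ θ₂ (Ico 0 T) α) :
    ∀ t ∈ Ico (0:ℝ) T,
      HasDerivAt (fun t => arcIntegral (fun u => α u t)
          (fun u => curvature (fun u => α u t) u ^ 2))
        (-2 * arcIntegral (fun u => α u t) (fun u => curvDeriv (fun u => α u t) 2 u ^ 2) +
          3 * arcIntegral (fun u => α u t)
            (fun u => curvature (fun u => α u t) u ^ 2 *
              curvDeriv (fun u => α u t) 1 u ^ 2)) t :=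
  evolution_k_squared' θ₁ θ₂ T α hflow


end
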